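/- arXiv:math/0507457 — 4 statements merged into one kernel-verified Lean document; each statement's English description precedes it below -/
import Mathlib

section
/- For all sign sequences ξ, η : ℤ → {−1,+1} and all (n,m) ∈ ℤ², set H(n,m) := ⌈(X_n + Y_m)/2⌉. Then H(n,m) − H(n,m−1) ∈ {−1, 1} if the horizontal edge {(n,m),(n+1,m)} is present in G(ξ,η) (i.e. η(m) = (−1)^n), and H(n,m) = H(n,m−1) otherwise; likewise H(n,m) − H(n−1,m) ∈ {−1, 1} if the vertical edge {(n,m),(n,m+1)} is present in G(ξ,η) (i.e. ξ(n) = (−1)^m), and H(n,m) = H(n−1,m) otherwise. (Thus H is the natural height function of the corner percolation configuration: it changes by exactly ±1 across each present edge and is constant across each absent edge.) -/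
/-- The corner percolation graph `G(ξ,η)` on `ℤ²`: the vertical edge
`{(n,m),(n,m+1)}` is present iff `ξ n = (-1)^m`, and the horizontal edge
`{(n,m),(n+1,m)}` is present iff `η m = (-1)^n`. -/
def cornerGraph (ξ η : ℤ → ℤ) : SimpleGraph (ℤ × ℤ) where
  Adj u v :=
    (u.2 = v.2 ∧ ((v.1 = u.1 + 1 ∧ η u.2 = (u.1.negOnePow : ℤ)) ∨
        (u.1 = v.1 + 1 ∧ η v.2 = (v.1.negOnePow : ℤ)))) ∨
    (u.1 = v.1 ∧ ((v.2 = u.2 + 1 ∧ ξ u.1 = (u.2.negOnePow : ℤ)) ∨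
        (u.2 = v.2 + 1 ∧ ξ v.1 = (v.2.negOnePow : ℤ))))
  symm := by
    constructor
    rintro u v (⟨h, hd⟩ | ⟨h, hd⟩)
    · exact Or.inl ⟨h.symm, hd.symm⟩
    · exact Or.inr ⟨h.symm, hd.symm⟩
  loopless := by
    constructor
    rintro u (⟨-, ⟨h, -⟩ | ⟨h, -⟩⟩ | ⟨-, ⟨h, -⟩ | ⟨h, -⟩⟩) <;> omega

/-!
The walks have `X n ≡ n` and `Y m ≡ m (mod 2)`, so `X n + Y (m - 1)` has the parity of
`n + m - 1`. A step `ε = ±1` of an integer `s` changes `⌈s/2⌉` (by `ε`) exactly when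
`ε = (-1)^s`, i.e. when it goes up from an even or down from an odd integer. For the step
`(-1)^(m+1) η m` of `Y` this condition reads `η m = (-1)^n`, and symmetrically for `X`.
-/

lemma Int.ceil_intCast_div_two (a : ℤ) : ⌈(a : ℚ) / 2⌉ = (a + 1) / 2 := by
  rw [Int.ceil_eq_iff, lt_div_iff₀ two_pos, div_le_iff₀ two_pos]
  constructor <;> norm_cast <;> omega

lemma Int.units_mul_eq_one_or_neg_one (u : ℤˣ) {σ : ℤ} (hσ : σ = 1 ∨ σ = -1) :
    (u : ℤ) * σ = 1 ∨ (u : ℤ) * σ = -1 := by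
  rcases Int.units_eq_one_or u with rfl | rfl <;> rcases hσ with rfl | rfl <;> simp

lemma ceil_half_add_sign (s ε : ℤ) (hε : ε = 1 ∨ ε = -1) :
    ⌈((s + ε : ℤ) : ℚ) / 2⌉ - ⌈(s : ℚ) / 2⌉ = if ε = s.negOnePow then ε else 0 := by
  rw [Int.ceil_intCast_div_two, Int.ceil_intCast_div_two]
  rcases Int.even_or_odd s with hs | hs
  · rw [Int.negOnePow_even s hs]
    obtain ⟨k, rfl⟩ := hs
    rcases hε with rfl | rfl <;> norm_num <;> omega
  · rw [Int.negOnePow_odd s hs]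
    obtain ⟨k, rfl⟩ := hs
    rcases hε with rfl | rfl <;> norm_num <;> omega

lemma negOnePow_walk_eq (X ξ : ℤ → ℤ) (hξ : ∀ n, ξ n = 1 ∨ ξ n = -1) (hX0 : X 0 = 0)
    (hX : ∀ n : ℤ, X n - X (n - 1) = ((n + 1).negOnePow : ℤ) * ξ n) (n : ℤ) :
    (X n).negOnePow = n.negOnePow := by
  have step n : X n - X (n - 1) = 1 ∨ X n - X (n - 1) = -1 :=
    hX n ▸ Int.units_mul_eq_one_or_neg_one _ (hξ n)
  rw [Int.negOnePow_eq_iff]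
  induction n using Int.induction_on with
  | zero => simp [hX0]
  | succ k ih =>
    have := step (k + 1)
    rw [add_sub_cancel_right] at this
    rcases this with h | h <;> rw [even_iff_two_dvd] at ih ⊢ <;> omega
  | pred k ih =>
    rcases step (-k) with h | h <;> rw [even_iff_two_dvd] at ih ⊢ <;> omega

lemma ceil_half_walk_step (p q s σ : ℤ) (hσ : σ = 1 ∨ σ = -1)
    (hs : s.negOnePow = (p + (q - 1)).negOnePow) :
    (σ = p.negOnePow →
        ⌈((s + (q + 1).negOnePow * σ : ℤ) : ℚ) / 2⌉ - ⌈(s : ℚ) / 2⌉ = -1 ∨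
        ⌈((s + (q + 1).negOnePow * σ : ℤ) : ℚ) / 2⌉ - ⌈(s : ℚ) / 2⌉ = 1) ∧
    (σ ≠ p.negOnePow →
        ⌈((s + (q + 1).negOnePow * σ : ℤ) : ℚ) / 2⌉ = ⌈(s : ℚ) / 2⌉) := by
  have hε := Int.units_mul_eq_one_or_neg_one (q + 1).negOnePow hσ
  have hcond : ((q + 1).negOnePow * σ : ℤ) = s.negOnePow ↔ σ = p.negOnePow := by
    have : (p + (q - 1)).negOnePow = (q + 1).negOnePow * p.negOnePow := by
      rw [← Int.negOnePow_add, Int.negOnePow_eq_iff]; exact ⟨-1, by ring⟩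
    rw [hs, this, Units.val_mul, mul_right_inj' (Units.ne_zero _)]
  have hstep := ceil_half_add_sign s _ hε
  simp only [hcond] at hstep
  refine ⟨fun h => ?_, fun h => ?_⟩
  · rw [hstep, if_pos h]
    exact hε.symm
  · rw [← sub_eq_zero, hstep, if_neg h]

/-- For the walks `X`, `Y` associated to the sign sequences `ξ`, `η`, the
height function `H(n,m) = ⌈(X n + Y m)/2⌉` changes by exactly `±1` across each
present edge of the corner percolation configuration `G(ξ,η)` and is constant
across each absent edge. -/
theorem statement_0 (ξ η X Y : ℤ → ℤ)
    (hξ : ∀ n, ξ n = 1 ∨ ξ n = -1) (hη : ∀ m, η m = 1 ∨ η m = -1)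
    (hX0 : X 0 = 0) (hY0 : Y 0 = 0)
    (hX : ∀ n : ℤ, X n - X (n - 1) = ((n + 1).negOnePow : ℤ) * ξ n)
    (hY : ∀ m : ℤ, Y m - Y (m - 1) = ((m + 1).negOnePow : ℤ) * η m)
    (H : ℤ → ℤ → ℤ) (hH : ∀ n m : ℤ, H n m = ⌈((X n + Y m : ℤ) : ℚ) / 2⌉)
    (n m : ℤ) :
    ((η m = (n.negOnePow : ℤ) →
        (H n m - H n (m - 1) = -1 ∨ H n m - H n (m - 1) = 1)) ∧
     (η m ≠ (n.negOnePow : ℤ) → H n m = H n (m - 1))) ∧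
    ((ξ n = (m.negOnePow : ℤ) →
        (H n m - H (n - 1) m = -1 ∨ H n m - H (n - 1) m = 1)) ∧
     (ξ n ≠ (m.negOnePow : ℤ) → H n m = H (n - 1) m)) := by
  have hXpar := negOnePow_walk_eq X ξ hξ hX0 hX
  have hYpar := negOnePow_walk_eq Y η hη hY0 hY
  have horizontal := ceil_half_walk_step n m (X n + Y (m - 1)) (η m) (hη m)
    (by rw [Int.negOnePow_add, hXpar, hYpar, Int.negOnePow_add])
  have vertical := ceil_half_walk_step m n (X (n - 1) + Y m) (ξ n) (hξ n)
    (by rw [Int.negOnePow_add, hXpar, hYpar, Int.negOnePow_add, mul_comm])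
  rw [← hY m, add_add_sub_cancel] at horizontal
  rw [← hX n, add_right_comm, add_sub_cancel] at vertical
  simp only [hH]
  exact ⟨horizontal, vertical⟩
end

section
/- Let X, Y : ℤ → ℤ be sequences with |X_{n+1} − X_n| = 1 and |Y_{m+1} − Y_m| = 1 for all n, m. Suppose X[a,c] is an up-excursion of height h with X_a = X_c = 0 and Y[b,d] is an up-excursion of height h with Y_b = Y_d = −h. Then: (i) X_n + Y_m > 0 for every (n,m) in the set 𝒫 := {(n,m) : a < n < c, b < m < d, and (X_n = h or Y_m = 0)}, and 𝒫 contains a full column {n*} × (b,d) for some n* with X_{n*} = h and a full row (a,c) × {m*} for some m* with Y_{m*} = 0; (ii) X_n + Y_m ≤ 0 whenever n ∈ {a,c} and b ≤ m ≤ d, and whenever m ∈ {b,d} and a ≤ n ≤ c. -/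
/-- `X[a,c]` is an up-excursion of height `h ≥ 1`. -/
def IsUpExcursion (X : ℤ → ℤ) (a c h : ℤ) : Prop :=
  1 ≤ h ∧ a < c ∧ X a = X c ∧ (∀ j, a < j → j < c → X a < X j) ∧
  (∀ j, a ≤ j → j ≤ c → X j - X a ≤ h) ∧ (∃ j, a ≤ j ∧ j ≤ c ∧ X j - X a = h)

/-- For `X[a,c]` an up-excursion of height `h` with `X a = X c = 0` and
`Y[b,d]` an up-excursion of height `h` with `Y b = Y d = -h`:
(i) `X n + Y m > 0` on the set `𝒫` of interior points with `X n = h` or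
`Y m = 0`, and `𝒫` contains a full column and a full row of the open
rectangle; (ii) `X n + Y m ≤ 0` on the boundary of the rectangle
`[a,c] × [b,d]`. -/
theorem statement_9 (X Y : ℤ → ℤ)
    (hXstep : ∀ n : ℤ, X (n + 1) - X n = 1 ∨ X (n + 1) - X n = -1)
    (hYstep : ∀ m : ℤ, Y (m + 1) - Y m = 1 ∨ Y (m + 1) - Y m = -1)
    (a c b d h : ℤ)
    (hX : IsUpExcursion X a c h) (hXa : X a = 0)
    (hY : IsUpExcursion Y b d h) (hYb : Y b = -h) :
    ((∀ n m : ℤ, a < n → n < c → b < m → m < d → (X n = h ∨ Y m = 0) →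
        0 < X n + Y m) ∧
      (∃ n', a < n' ∧ n' < c ∧ X n' = h) ∧
      (∃ m', b < m' ∧ m' < d ∧ Y m' = 0)) ∧
    ((∀ m : ℤ, b ≤ m → m ≤ d → X a + Y m ≤ 0 ∧ X c + Y m ≤ 0) ∧
      (∀ n : ℤ, a ≤ n → n ≤ c → X n + Y b ≤ 0 ∧ X n + Y d ≤ 0)) := by
  obtain ⟨hh, hac, hXac, hXpos, hXle, jX, hjX1, hjX2, hjX3⟩ := hX
  obtain ⟨hh', hbd, hYbd, hYpos, hYle, jY, hjY1, hjY2, hjY3⟩ := hY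
  refine ⟨⟨?_, ?_, ?_⟩, ?_, ?_⟩
  · intro n m hn hn' hm hm' hor
    rcases hor with hXn | hYm
    · have := hYpos m hm hm'
      omega
    · have := hXpos n hn hn'
      omega
  · refine ⟨jX, ?_, ?_, by omega⟩
    · rcases lt_or_eq_of_le hjX1 with h1 | h1
      · exact h1
      · subst h1; omega
    · rcases lt_or_eq_of_le hjX2 with h1 | h1
      · exact h1
      · subst h1; omega
  · refine ⟨jY, ?_, ?_, by omega⟩
    · rcases lt_or_eq_of_le hjY1 with h1 | h1
      · exact h1
      · subst h1; omega
    · rcases lt_or_eq_of_le hjY2 with h1 | h1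
      · exact h1
      · subst h1; omega
  · intro m hm hm'
    have := hYle m hm hm'
    omega
  · intro n hn hn'
    have := hXle n hn hn'
    omega
end

section
/- Let X, Y : ℤ → ℤ. Suppose X[a₁,c₁] and Y[b₁,d₁] are up-excursions with m₁ := X_{a₁}, M₁ := max_{a₁≤j≤c₁} X_j, n₁ := Y_{b₁}, N₁ := max_{b₁≤j≤d₁} Y_j satisfying m₁ + N₁ = n₁ + M₁ = 0, and suppose X[a₂,c₂] and Y[b₂,d₂] are down-excursions with M₂ := X_{a₂}, m₂ := min_{a₂≤j≤c₂} X_j, N₂ := Y_{b₂}, n₂ := min_{b₂≤j≤d₂} Y_j satisfying m₂ + N₂ = n₂ + M₂ = 1 (these conditions say that the corresponding up-contour and down-contour both lie on level 0). Then it is impossible that simultaneously a₁ < a₂ ≤ c₁ < c₂ and b₁ < b₂ ≤ d₁ < d₂. -/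
/-- `X[a,c]` is a down-excursion of height `h ≥ 1`. -/
def IsDownExcursion (X : ℤ → ℤ) (a c h : ℤ) : Prop :=
  1 ≤ h ∧ a < c ∧ X a = X c ∧ (∀ j, a < j → j < c → X j < X a) ∧
  (∀ j, a ≤ j → j ≤ c → X a - X j ≤ h) ∧ (∃ j, a ≤ j ∧ j ≤ c ∧ X a - X j = h)

/-- An up-contour on level 0 (given by up-excursions `X[a₁,c₁]`, `Y[b₁,d₁]`
with `m₁ + N₁ = n₁ + M₁ = 0`) and a down-contour on level 0 (given by
down-excursions `X[a₂,c₂]`, `Y[b₂,d₂]` with `m₂ + N₂ = n₂ + M₂ = 1`) can never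
have their enclosing rectangles interleaved in both coordinates. -/
theorem statement_10 (X Y : ℤ → ℤ)
    (a₁ c₁ b₁ d₁ a₂ c₂ b₂ d₂ : ℤ) (M₁ N₁ m₂ n₂ : ℤ)
    (hX1 : ∃ h : ℤ, IsUpExcursion X a₁ c₁ h)
    (hY1 : ∃ h : ℤ, IsUpExcursion Y b₁ d₁ h)
    (hM1 : IsGreatest {v : ℤ | ∃ j, a₁ ≤ j ∧ j ≤ c₁ ∧ v = X j} M₁)
    (hN1 : IsGreatest {v : ℤ | ∃ j, b₁ ≤ j ∧ j ≤ d₁ ∧ v = Y j} N₁)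
    (hlevel1 : X a₁ + N₁ = 0 ∧ Y b₁ + M₁ = 0)
    (hX2 : ∃ h : ℤ, IsDownExcursion X a₂ c₂ h)
    (hY2 : ∃ h : ℤ, IsDownExcursion Y b₂ d₂ h)
    (hm2 : IsLeast {v : ℤ | ∃ j, a₂ ≤ j ∧ j ≤ c₂ ∧ v = X j} m₂)
    (hn2 : IsLeast {v : ℤ | ∃ j, b₂ ≤ j ∧ j ≤ d₂ ∧ v = Y j} n₂)
    (hlevel2 : m₂ + Y b₂ = 1 ∧ n₂ + X a₂ = 1) :
    ¬(a₁ < a₂ ∧ a₂ ≤ c₁ ∧ c₁ < c₂ ∧ b₁ < b₂ ∧ b₂ ≤ d₁ ∧ d₁ < d₂) := by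
  rintro ⟨h1, h2, h3, h4, h5, h6⟩
  obtain ⟨hY, hYex⟩ := hY1
  -- X a₂ ≤ M₁ since a₁ ≤ a₂ ≤ c₁
  have hXa2 : X a₂ ≤ M₁ := hM1.2 ⟨a₂, le_of_lt h1, h2, rfl⟩
  -- n₂ ≤ Y d₁ since b₂ ≤ d₁ ≤ d₂
  have hYd1 : n₂ ≤ Y d₁ := hn2.2 ⟨d₁, h5, le_of_lt h6, rfl⟩
  have hYb1 : Y b₁ = Y d₁ := hYex.2.2.1
  linarith [hlevel1.2, hlevel2.2]
end

section
/- Let h ≥ 2 and 1 ≤ i ≤ h−1. (i) Expected number of visits: 𝔼_1[#{0 ≤ k ≤ T_h : S_k = i} | T_h < T_0] = 2i(h−i)/h and 𝔼_h[#{0 ≤ k ≤ T_0 : S_k = i} | T_0 < T_{h+1}] = 2i(h+1−i)/(h+1); in particular the excursion conditioned to have height h (the concatenation of the two conditioned legs) visits i an expected 2i(h−i)/h + 2i(h+1−i)/(h+1) times. (ii) Expected number of {i,i+1}-crossings: 𝔼_1[#{0 ≤ k < T_h : {S_k, S_{k+1}} = {i, i+1}} | T_h < T_0] = 2(h−i)(i+1)/h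 − 1 and 𝔼_h[#{0 ≤ k < T_0 : {S_k, S_{k+1}} = {i, i+1}} | T_0 < T_{h+1}] = 2(h+1−i)(i+1)/(h+1) − 1. -/
open MeasureTheory
open scoped ENNReal Classical

/-- `P` is the law (on trajectory space `ℕ → ℤ`) of simple random walk on `ℤ`
started at `j`: each admissible prefix of length `n` has probability `(1/2)^n`. -/
def IsSRWFrom (P : Measure (ℕ → ℤ)) (j : ℤ) : Prop :=
  IsProbabilityMeasure P ∧ ∀ (n : ℕ) (f : ℕ → ℤ),
    P {x | ∀ k ≤ n, x k = f k} =
      if f 0 = j ∧ ∀ k < n, f (k + 1) - f k = 1 ∨ f (k + 1) - f k = -1 then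
        (1/2 : ℝ≥0∞) ^ n
      else 0

/-- The first hitting time `T_a` of `a ∈ ℤ`, as an element of `ℕ∞`. -/
noncomputable def hitTime (a : ℤ) (x : ℕ → ℤ) : ℕ∞ :=
  sInf ((↑) '' {k : ℕ | x k = a})

/-- The number of visits to `i` up to time `T_a` (with values in `ℝ≥0∞`). -/
noncomputable def visitCount (i a : ℤ) (x : ℕ → ℤ) : ℝ≥0∞ :=
  ∑' k : ℕ, if (k : ℕ∞) ≤ hitTime a x ∧ x k = i then 1 else 0

/-- The number of `{i,i+1}`-crossings strictly before time `T_a`. -/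
noncomputable def crossCount (i a : ℤ) (x : ℕ → ℤ) : ℝ≥0∞ :=
  ∑' k : ℕ, if (k : ℕ∞) < hitTime a x ∧
      ((x k = i ∧ x (k + 1) = i + 1) ∨ (x k = i + 1 ∧ x (k + 1) = i)) then 1
    else 0

/-!
Reflecting paths through `(h + 1) / 2` turns the back leg into the walk from `1` conditioned on
`T_{h+1} < T_0`, so both legs are instances of the walk from `1` conditioned on `T_h < T_0`, and
visits to `i` resp. `{i, i+1}`-crossings are counts of steps lying in a set `W` of edges.
Decomposing according to the value `n` of `T_h` and averaging over the `2 ^ n` step sequences,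
a first-step analysis shows that `u j = ℙ_j(T_h < T_0)` is harmonic on `(0, h)` with `u 0 = 0`,
`u h = 1`, hence `u j = j / h`, and that `G j = 𝔼_j[#W-steps before T_h; T_h < T_0]` solves
`2 G j = σ j + G (j + 1) + G (j - 1)` with `G 0 = G h = 0` and source
`σ j = 1_W(j, j+1) u (j + 1) + 1_W(j, j-1) u (j - 1)`. Summing this discrete Poisson equation
twice gives `h G 1 = ∑ (h - t) σ t`, and the answer is `G 1 / u 1`. The quadratic supersolution
`j (2h - j)` keeps `G` finite.
-/

namespace SimpleRandomWalk

open Finset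

theorem eq_of_discrete_poisson {g s : ℤ → ℝ} {h : ℕ}
    (hrec : ∀ j : ℤ, 0 < j → j < h → 2 * g j = s j + g (j + 1) + g (j - 1)) (h0 : g 0 = 0) :
    ∀ m ≤ h, g m = m * g 1 - ∑ t ∈ Icc 1 m, ((m : ℝ) - t) * s t := by
  intro m
  induction m using Nat.twoStepInduction with
  | zero => simp [h0]
  | one => simp
  | more n ih₀ ih₁ =>
    intro hm
    have hstep := hrec (n + 1) (by positivity) (by omega)
    have e₀ := ih₀ (by omega)
    have e₁ := ih₁ (by omega)
    have top : ∑ t ∈ Icc 1 (n + 2), ((n + 2 : ℕ) - (t : ℝ)) * s t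
        = ∑ t ∈ Icc 1 (n + 1), ((n + 2 : ℕ) - (t : ℝ)) * s t := by
      rw [sum_Icc_succ_top (by omega)]; push_cast; ring
    have low : ∑ t ∈ Icc 1 (n + 1), ((n : ℝ) - t) * s t
        = ∑ t ∈ Icc 1 n, ((n : ℝ) - t) * s t - s (n + 1) := by
      rw [sum_Icc_succ_top (by omega)]; push_cast; ring
    have split : ∑ t ∈ Icc 1 (n + 1), ((n + 2 : ℕ) - (t : ℝ)) * s t
        = 2 * ∑ t ∈ Icc 1 (n + 1), ((n + 1 : ℕ) - (t : ℝ)) * s t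
          - ∑ t ∈ Icc 1 (n + 1), ((n : ℝ) - t) * s t := by
      rw [mul_sum, ← sum_sub_distrib]
      exact sum_congr rfl fun t _ => by push_cast; ring
    rw [top, split, low]
    rw [show (n : ℤ) + 1 - 1 = n by ring] at hstep
    push_cast at e₀ e₁ hstep ⊢
    rw [show (n : ℤ) + 1 + 1 = n + 2 by ring] at hstep
    linear_combination -hstep + 2 * e₁ - e₀

theorem toReal_eq_of_discrete_poisson {G σ : ℤ → ℝ≥0∞} {h : ℕ}
    (hG : ∀ j : ℤ, 0 ≤ j → j ≤ h → G j ≠ ⊤) (hσ : ∀ j : ℤ, 0 < j → j < h → σ j ≠ ⊤)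
    (hrec : ∀ j : ℤ, 0 < j → j < h → G j = 2⁻¹ * (σ j + G (j + 1) + G (j - 1)))
    (h0 : G 0 = 0) :
    ∀ m ≤ h, (G m).toReal = m * (G 1).toReal - ∑ t ∈ Icc 1 m, ((m : ℝ) - t) * (σ t).toReal := by
  refine eq_of_discrete_poisson (g := fun j => (G j).toReal) (s := fun j => (σ j).toReal)
    (fun j hj₀ hjh => ?_) (by simp [h0])
  have hG_succ := hG (j + 1) (by omega) (by omega)
  have hG_pred := hG (j - 1) (by omega) (by omega)
  rw [hrec j hj₀ hjh, ENNReal.toReal_mul, ENNReal.toReal_add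
      (ENNReal.add_ne_top.2 ⟨hσ j hj₀ hjh, hG_succ⟩) hG_pred,
    ENNReal.toReal_add (hσ j hj₀ hjh) hG_succ]
  simp

/-- Comparison principle for the first-step recursion. -/
theorem tsum_le_of_supersolution {a : ℤ → ℕ → ℝ≥0∞} {c φ : ℤ → ℝ≥0∞} {h : ℤ}
    (hbdry : ∀ N, ∑ n ∈ range N, a 0 n ≤ φ 0 ∧ ∑ n ∈ range N, a h n ≤ φ h)
    (hstep : ∀ N, ∀ j, 0 < j → j < h → ∑ n ∈ range (N + 1), a j n
      ≤ 2⁻¹ * (c j + ∑ n ∈ range N, a (j + 1) n + ∑ n ∈ range N, a (j - 1) n))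
    (hφ : ∀ j, 0 < j → j < h → 2⁻¹ * (c j + φ (j + 1) + φ (j - 1)) ≤ φ j)
    {j : ℤ} (hj₀ : 0 ≤ j) (hjh : j ≤ h) :
    ∑' n, a j n ≤ φ j := by
  suffices H : ∀ N, ∀ j, 0 ≤ j → j ≤ h → ∑ n ∈ range N, a j n ≤ φ j from
    ENNReal.tsum_le_of_sum_range_le fun N => H N j hj₀ hjh
  intro N
  induction N with
  | zero => simp
  | succ N ih =>
    intro j hj₀ hjh
    rcases hj₀.eq_or_lt with rfl | hj₀
    · exact (hbdry _).1
    rcases hjh.eq_or_lt with rfl | hjh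
    · exact (hbdry _).2
    calc ∑ n ∈ range (N + 1), a j n
        ≤ 2⁻¹ * (c j + ∑ n ∈ range N, a (j + 1) n + ∑ n ∈ range N, a (j - 1) n) :=
          hstep N j hj₀ hjh
      _ ≤ 2⁻¹ * (c j + φ (j + 1) + φ (j - 1)) := by
          gcongr
          · exact ih _ (by omega) (by omega)
          · exact ih _ (by omega) (by omega)
      _ ≤ φ j := hφ j hj₀ hjh

def step (b : Bool) : ℤ := if b then 1 else -1

@[simp] lemma step_true : step true = 1 := rfl

@[simp] lemma step_false : step false = -1 := rfl

lemma step_injective : Function.Injective step := by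
  intro a b
  cases a <;> cases b <;> simp

/-- The walk from `j` with steps `s`, frozen after time `n`. -/
def walk {n : ℕ} (j : ℤ) (s : Fin n → Bool) (k : ℕ) : ℤ :=
  j + ∑ m : Fin n, if (m : ℕ) < k then step (s m) else 0

section walk

variable {n : ℕ} (j : ℤ) (s : Fin n → Bool)

@[simp] lemma walk_zero : walk j s 0 = j := by simp [walk]

lemma walk_cons_succ (b : Bool) (k : ℕ) :
    walk j (Fin.cons b s : Fin (n + 1) → Bool) (k + 1) = walk (j + step b) s k := by
  simp [walk, Fin.sum_univ_succ, add_assoc]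

lemma walk_succ_sub {k : ℕ} (hk : k < n) : walk j s (k + 1) - walk j s k = step (s ⟨k, hk⟩) := by
  have hdiff : ∀ m : Fin n, (if (m : ℕ) < k + 1 then step (s m) else 0)
      - (if (m : ℕ) < k then step (s m) else 0) = if m = ⟨k, hk⟩ then step (s m) else 0 := by
    intro m
    simp only [Fin.ext_iff]
    split_ifs <;> omega
  simp only [walk, add_sub_add_left_eq_sub, ← sum_sub_distrib, hdiff, sum_ite_eq', mem_univ,
    if_true]

lemma walk_succ_sub_eq_one_or_eq_neg_one {k : ℕ} (hk : k < n) :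
    walk j s (k + 1) - walk j s k = 1 ∨ walk j s (k + 1) - walk j s k = -1 := by
  rw [walk_succ_sub j s hk]
  cases s ⟨k, hk⟩ <;> simp

lemma walk_injective {t : Fin n → Bool} (hst : ∀ k ≤ n, walk j s k = walk j t k) : s = t := by
  funext m
  apply step_injective
  rw [← walk_succ_sub j s m.isLt, ← walk_succ_sub j t m.isLt, hst _ m.isLt, hst _ m.isLt.le]

end walk

lemma sum_bool_tuples_succ {n : ℕ} (F : (Fin (n + 1) → Bool) → ℝ≥0∞) :
    ∑ s, (2⁻¹ : ℝ≥0∞) ^ (n + 1) * F s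
      = 2⁻¹ * (∑ s, 2⁻¹ ^ n * F (Fin.cons true s) + ∑ s, 2⁻¹ ^ n * F (Fin.cons false s)) := by
  rw [← (Fin.consEquiv fun _ => Bool).sum_comp, Fintype.sum_prod_type, Fintype.sum_bool,
    mul_add, mul_sum, mul_sum]
  simp [Fin.consEquiv, pow_succ', mul_assoc]

def firstExitTop (h n : ℕ) : Set (ℕ → ℤ) :=
  {x | x n = h ∧ ∀ k < n, x k ≠ 0 ∧ x k ≠ h}

noncomputable def edgeVisitsUpTo (W : Set (ℤ × ℤ)) (n : ℕ) (x : ℕ → ℤ) : ℝ≥0∞ :=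
  ∑ k ∈ range n, W.indicator 1 (x k, x (k + 1))

section firstStep

variable {h n : ℕ} {j : ℤ} (s : Fin n → Bool) (b : Bool)

lemma walk_mem_firstExitTop_zero (s : Fin 0 → Bool) : walk j s ∈ firstExitTop h 0 ↔ j = h := by
  simp [firstExitTop]

lemma walk_cons_mem_firstExitTop :
    walk j (Fin.cons b s : Fin (n + 1) → Bool) ∈ firstExitTop h (n + 1)
      ↔ (j ≠ 0 ∧ j ≠ h) ∧ walk (j + step b) s ∈ firstExitTop h n := by
  simp only [firstExitTop, Set.mem_ofPred_eq, Nat.forall_lt_succ_left, walk_cons_succ, walk_zero]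
  tauto

lemma edgeVisitsUpTo_walk_cons (W : Set (ℤ × ℤ)) :
    edgeVisitsUpTo W (n + 1) (walk j (Fin.cons b s : Fin (n + 1) → Bool))
      = W.indicator 1 (j, j + step b) + edgeVisitsUpTo W n (walk (j + step b) s) := by
  rw [edgeVisitsUpTo, sum_range_succ', add_comm, walk_cons_succ j s b 0]
  simp only [walk_cons_succ, walk_zero, edgeVisitsUpTo]

end firstStep

noncomputable def probExitTopAt (h : ℕ) (j : ℤ) (n : ℕ) : ℝ≥0∞ :=
  ∑ s : Fin n → Bool, 2⁻¹ ^ n * (firstExitTop h n).indicator 1 (walk j s)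

noncomputable def visitsExitTopAt (W : Set (ℤ × ℤ)) (h : ℕ) (j : ℤ) (n : ℕ) : ℝ≥0∞ :=
  ∑ s : Fin n → Bool, 2⁻¹ ^ n * (firstExitTop h n).indicator (edgeVisitsUpTo W n) (walk j s)

section recursion

variable {W : Set (ℤ × ℤ)} {h : ℕ} {j : ℤ} {n : ℕ}

lemma probExitTopAt_zero : probExitTopAt h j 0 = if j = h then 1 else 0 := by
  simp [probExitTopAt, Set.indicator_apply, walk_mem_firstExitTop_zero]

lemma probExitTopAt_succ (hj₀ : j ≠ 0) (hjh : j ≠ h) :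
    probExitTopAt h j (n + 1) = 2⁻¹ * (probExitTopAt h (j + 1) n + probExitTopAt h (j - 1) n) := by
  rw [probExitTopAt, sum_bool_tuples_succ]
  simp [probExitTopAt, Set.indicator_apply, walk_cons_mem_firstExitTop, hj₀, hjh, sub_eq_add_neg]

lemma probExitTopAt_succ_eq_zero (hj : j = 0 ∨ j = h) : probExitTopAt h j (n + 1) = 0 := by
  rw [probExitTopAt, sum_bool_tuples_succ]
  rcases hj with rfl | rfl <;> simp [walk_cons_mem_firstExitTop]

@[simp] lemma visitsExitTopAt_zero : visitsExitTopAt W h j 0 = 0 := by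
  simp [visitsExitTopAt, edgeVisitsUpTo]

lemma visitsExitTopAt_succ (hj₀ : j ≠ 0) (hjh : j ≠ h) :
    visitsExitTopAt W h j (n + 1)
      = 2⁻¹ * ((W.indicator 1 (j, j + 1) * probExitTopAt h (j + 1) n
          + visitsExitTopAt W h (j + 1) n)
        + (W.indicator 1 (j, j - 1) * probExitTopAt h (j - 1) n
          + visitsExitTopAt W h (j - 1) n)) := by
  have hcons : ∀ (b : Bool) (s : Fin n → Bool),
      (firstExitTop h (n + 1)).indicator (edgeVisitsUpTo W (n + 1)) (walk j (Fin.cons b s))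
        = W.indicator 1 (j, j + step b) * (firstExitTop h n).indicator 1 (walk (j + step b) s)
          + (firstExitTop h n).indicator (edgeVisitsUpTo W n) (walk (j + step b) s) := by
    intro b s
    simp only [Set.indicator_apply, walk_cons_mem_firstExitTop, edgeVisitsUpTo_walk_cons]
    split_ifs <;> simp_all
  rw [visitsExitTopAt, sum_bool_tuples_succ]
  simp only [visitsExitTopAt, probExitTopAt, hcons, mul_add, sum_add_distrib,
    mul_left_comm _ (W.indicator 1 _), ← mul_sum, step_true, step_false, ← sub_eq_add_neg]

lemma visitsExitTopAt_succ_eq_zero (hj : j = 0 ∨ j = h) : visitsExitTopAt W h j (n + 1) = 0 := by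
  rw [visitsExitTopAt, sum_bool_tuples_succ]
  rcases hj with rfl | rfl <;> simp [walk_cons_mem_firstExitTop]

end recursion

/-- `ℙ_j(T_h < T_0)`. -/
noncomputable def probExitTop (h : ℕ) (j : ℤ) : ℝ≥0∞ := ∑' n, probExitTopAt h j n

/-- `𝔼_j[number of steps in W before T_h; T_h < T_0]`. -/
noncomputable def visitsExitTop (W : Set (ℤ × ℤ)) (h : ℕ) (j : ℤ) : ℝ≥0∞ :=
  ∑' n, visitsExitTopAt W h j n

/-- Twice `𝔼_j[1_W(S_0, S_1); T_h < T_0]`. -/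
noncomputable def edgeSource (W : Set (ℤ × ℤ)) (h : ℕ) (j : ℤ) : ℝ≥0∞ :=
  W.indicator 1 (j, j + 1) * probExitTop h (j + 1) + W.indicator 1 (j, j - 1) * probExitTop h (j - 1)

section series

variable {W : Set (ℤ × ℤ)} {h : ℕ} {j : ℤ}

lemma probExitTop_zero (hh : h ≠ 0) : probExitTop h 0 = 0 := by
  rw [probExitTop, tsum_eq_zero_add' ENNReal.summable, probExitTopAt_zero]
  simp [probExitTopAt_succ_eq_zero, Ne.symm (Int.natCast_ne_zero.2 hh)]

lemma probExitTop_self : probExitTop h h = 1 := by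
  rw [probExitTop, tsum_eq_zero_add' ENNReal.summable, probExitTopAt_zero]
  simp [probExitTopAt_succ_eq_zero]

lemma probExitTop_eq (hj₀ : 0 < j) (hjh : j < h) :
    probExitTop h j = 2⁻¹ * (probExitTop h (j + 1) + probExitTop h (j - 1)) := by
  rw [probExitTop, tsum_eq_zero_add' ENNReal.summable, probExitTopAt_zero, if_neg hjh.ne]
  simp only [probExitTopAt_succ hj₀.ne' hjh.ne, ENNReal.tsum_mul_left, ENNReal.tsum_add, zero_add,
    probExitTop]

lemma visitsExitTop_zero : visitsExitTop W h 0 = 0 := by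
  rw [visitsExitTop, tsum_eq_zero_add' ENNReal.summable]
  simp [visitsExitTopAt_succ_eq_zero]

lemma visitsExitTop_self : visitsExitTop W h h = 0 := by
  rw [visitsExitTop, tsum_eq_zero_add' ENNReal.summable]
  simp [visitsExitTopAt_succ_eq_zero]

lemma visitsExitTop_eq (hj₀ : 0 < j) (hjh : j < h) :
    visitsExitTop W h j
      = 2⁻¹ * (edgeSource W h j + visitsExitTop W h (j + 1) + visitsExitTop W h (j - 1)) := by
  rw [visitsExitTop, tsum_eq_zero_add' ENNReal.summable, visitsExitTopAt_zero]
  simp only [visitsExitTopAt_succ hj₀.ne' hjh.ne, ENNReal.tsum_mul_left, ENNReal.tsum_add,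
    zero_add, probExitTop, visitsExitTop, edgeSource]
  ring

lemma sum_range_probExitTopAt_le_one (N : ℕ) (hj : j = 0 ∨ j = h) :
    ∑ n ∈ range N, probExitTopAt h j n ≤ 1 := by
  cases N with
  | zero => simp
  | succ N =>
    rw [sum_range_succ', probExitTopAt_zero]
    simp only [probExitTopAt_succ_eq_zero hj, sum_const_zero, zero_add]
    split_ifs <;> simp

lemma probExitTop_le_one (hj₀ : 0 ≤ j) (hjh : j ≤ h) : probExitTop h j ≤ 1 := by
  refine tsum_le_of_supersolution (a := probExitTopAt h) (c := 0) (φ := 1)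
    (fun N => ⟨sum_range_probExitTopAt_le_one N (.inl rfl),
      sum_range_probExitTopAt_le_one N (.inr rfl)⟩)
    (fun N j hj₀ hjh => ?_) (fun _ _ _ => by simp [mul_add, ENNReal.inv_two_add_inv_two]) hj₀ hjh
  rw [sum_range_succ', probExitTopAt_zero, if_neg hjh.ne]
  simp [probExitTopAt_succ hj₀.ne' hjh.ne, ← mul_sum, sum_add_distrib]

lemma probExitTop_ne_top (hj₀ : 0 ≤ j) (hjh : j ≤ h) : probExitTop h j ≠ ⊤ :=
  ne_top_of_le_ne_top ENNReal.one_ne_top (probExitTop_le_one hj₀ hjh)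

lemma sum_range_visitsExitTopAt_eq_zero (N : ℕ) (hj : j = 0 ∨ j = h) :
    ∑ n ∈ range N, visitsExitTopAt W h j n = 0 := by
  refine sum_eq_zero fun n _ => ?_
  cases n with
  | zero => exact visitsExitTopAt_zero
  | succ n => exact visitsExitTopAt_succ_eq_zero hj

lemma visitsExitTop_ne_top (hj₀ : 0 ≤ j) (hjh : j ≤ h) : visitsExitTop W h j ≠ ⊤ := by
  have hφ : ∀ j : ℤ, 0 < j → j < h →
      2⁻¹ * (2 + ENNReal.ofReal ((j + 1 : ℤ) * (2 * h - (j + 1 : ℤ)))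
        + ENNReal.ofReal ((j - 1 : ℤ) * (2 * h - (j - 1 : ℤ))))
      ≤ ENNReal.ofReal (j * (2 * h - j)) := fun j hj₀ hjh => by
    have hj₀' : (1 : ℝ) ≤ j := by exact_mod_cast hj₀
    have hjh' : (j : ℝ) + 1 ≤ h := by exact_mod_cast hjh
    push_cast
    rw [← ENNReal.ofReal_ofNat, ← ENNReal.ofReal_add (by norm_num) (by nlinarith),
      ← ENNReal.ofReal_add (by nlinarith) (by nlinarith), ← ENNReal.ofReal_inv_of_pos two_pos, ← ENNReal.ofReal_mul (by norm_num)]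
    exact ENNReal.ofReal_le_ofReal (by nlinarith)
  refine ne_top_of_le_ne_top ENNReal.ofReal_ne_top <|
    tsum_le_of_supersolution (c := 2) (φ := fun j => ENNReal.ofReal (j * (2 * h - j)))
    (fun N => by simp [sum_range_visitsExitTopAt_eq_zero]) (fun N j hj₀ hjh => ?_) hφ hj₀ hjh
  have hsource : ∀ (j' : ℤ) (e : ℤ × ℤ), 0 ≤ j' → j' ≤ h →
      W.indicator 1 e * ∑ n ∈ range N, probExitTopAt h j' n ≤ 1 := fun j' e h₀ h₁ =>
    mul_le_one' (Set.indicator_apply_le' (fun _ => le_rfl) (fun _ => zero_le_one))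
      ((ENNReal.sum_le_tsum _).trans (probExitTop_le_one h₀ h₁))
  rw [sum_range_succ', visitsExitTopAt_zero, add_zero]
  simp only [visitsExitTopAt_succ hj₀.ne' hjh.ne, ← mul_sum, sum_add_distrib]
  rw [add_add_add_comm, ← add_assoc]
  gcongr
  rw [← one_add_one_eq_two]
  exact add_le_add (hsource _ _ (by omega) (by omega)) (hsource _ _ (by omega) (by omega))

end series

lemma toReal_indicator_one {α : Type*} (S : Set α) (a : α) :
    (S.indicator (1 : α → ℝ≥0∞) a).toReal = S.indicator 1 a := by
  by_cases ha : a ∈ S <;> simp [ha]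

lemma indicator_one_mul_ne_top {α : Type*} (S : Set α) (a : α) {x : ℝ≥0∞} (hx : x ≠ ⊤) :
    S.indicator 1 a * x ≠ ⊤ :=
  ENNReal.mul_ne_top (by by_cases ha : a ∈ S <;> simp [ha]) hx

/-- The Green's function `2 (h - t) / h` of the walk from `1` killed at `{0, h}`, summed against
the expected number `(1_W(t, t+1) (t + 1) + 1_W(t, t-1) (t - 1)) / (2h)` of `W`-steps out of `t`
on `{T_h < T_0}`, divided by `ℙ_1(T_h < T_0) = 1 / h`. -/
noncomputable def edgeMean (W : Set (ℤ × ℤ)) (h : ℕ) : ℝ :=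
  (∑ t ∈ Icc 1 h, ((h : ℝ) - t) * (W.indicator 1 ((t : ℤ), (t : ℤ) + 1) * ((t : ℝ) + 1)
    + W.indicator 1 ((t : ℤ), (t : ℤ) - 1) * ((t : ℝ) - 1))) / h

section solution

variable {W : Set (ℤ × ℤ)} {h : ℕ}

lemma probExitTop_toReal (hh : h ≠ 0) {m : ℕ} (hm : m ≤ h) : (probExitTop h m).toReal = m / h := by
  have hpoisson := toReal_eq_of_discrete_poisson (G := probExitTop h) (σ := 0)
    (fun j hj₀ hjh => probExitTop_ne_top hj₀ hjh) (fun _ _ _ => ENNReal.zero_ne_top)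
    (fun j hj₀ hjh => by simpa using probExitTop_eq hj₀ hjh) (probExitTop_zero hh)
  have hone := hpoisson h le_rfl
  simp only [probExitTop_self, ENNReal.toReal_one, Pi.zero_apply, ENNReal.toReal_zero, mul_zero,
    sum_const_zero, sub_zero] at hone
  rw [hpoisson m hm]
  field_simp
  simp only [Pi.zero_apply, ENNReal.toReal_zero, mul_zero, sum_const_zero, sub_zero]
  linear_combination -(m : ℝ) * hone

lemma edgeSource_ne_top {j : ℤ} (hj₀ : 0 < j) (hjh : j < h) : edgeSource W h j ≠ ⊤ :=
  ENNReal.add_ne_top.2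
    ⟨indicator_one_mul_ne_top _ _ (probExitTop_ne_top (by omega) (by omega)),
      indicator_one_mul_ne_top _ _ (probExitTop_ne_top (by omega) (by omega))⟩

lemma edgeSource_toReal {t : ℕ} (hh : h ≠ 0) (ht₁ : 1 ≤ t) (hth : t < h) :
    (edgeSource W h t).toReal = (W.indicator 1 ((t : ℤ), (t : ℤ) + 1) * ((t : ℝ) + 1)
        + W.indicator 1 ((t : ℤ), (t : ℤ) - 1) * ((t : ℝ) - 1)) / h := by
  have hsucc := probExitTop_toReal hh (m := t + 1) (by omega)
  have hpred := probExitTop_toReal hh (m := t - 1) (by omega)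
  push_cast [ht₁] at hsucc hpred
  rw [edgeSource, ENNReal.toReal_add
      (indicator_one_mul_ne_top _ _ (probExitTop_ne_top (by omega) (by omega)))
      (indicator_one_mul_ne_top _ _ (probExitTop_ne_top (by omega) (by omega))),
    ENNReal.toReal_mul, ENNReal.toReal_mul, toReal_indicator_one, toReal_indicator_one, hsucc, hpred]
  ring

lemma visitsExitTop_one_toReal (hh : h ≠ 0) : (visitsExitTop W h 1).toReal = edgeMean W h / h := by
  have hpoisson := toReal_eq_of_discrete_poisson (G := visitsExitTop W h) (σ := edgeSource W h)
    (fun j hj₀ hjh => visitsExitTop_ne_top hj₀ hjh) (fun j hj₀ hjh => edgeSource_ne_top hj₀ hjh)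
    (fun j hj₀ hjh => visitsExitTop_eq hj₀ hjh) visitsExitTop_zero h le_rfl
  have hsum : ∀ t ∈ Icc 1 h, ((h : ℝ) - t) * (edgeSource W h t).toReal
      = ((h : ℝ) - t) * (W.indicator 1 ((t : ℤ), (t : ℤ) + 1) * ((t : ℝ) + 1)
        + W.indicator 1 ((t : ℤ), (t : ℤ) - 1) * ((t : ℝ) - 1)) / h := by
    intro t ht
    obtain ⟨ht₁, hth⟩ := mem_Icc.1 ht
    rcases hth.eq_or_lt with rfl | hth
    · simp
    rw [edgeSource_toReal hh ht₁ hth, mul_div_assoc]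
  rw [visitsExitTop_self, ENNReal.toReal_zero, sum_congr rfl hsum, ← sum_div] at hpoisson
  have hh' : (h : ℝ) ≠ 0 := by exact_mod_cast hh
  rw [edgeMean]
  field_simp at hpoisson ⊢
  linarith

end solution

lemma measurableSet_of_dependsOn {α : Type*} [MeasurableSpace α] [Countable α]
    [MeasurableSingletonClass α] {S : Set (ℕ → α)} {n : ℕ} (hS : DependsOn (· ∈ S) (Set.Iic n)) :
    MeasurableSet S := by
  set π : (ℕ → α) → Fin (n + 1) → α := fun x k => x k
  have hπ : Measurable π := measurable_pi_lambda _ fun k => measurable_pi_apply _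
  have hS' : π ⁻¹' (π '' S) = S := by
    refine subset_antisymm ?_ (Set.subset_preimage_image π S)
    rintro x ⟨y, hy, hyx⟩
    have hxy : (y ∈ S) = (x ∈ S) := hS fun k hk => congrFun hyx ⟨k, Nat.lt_succ_of_le hk⟩
    exact hxy ▸ hy
  exact hS' ▸ hπ MeasurableSet.of_discrete

lemma dependsOn_indicator {ι α β : Type*} [Zero β] {S : Set (ι → α)} {f : (ι → α) → β}
    {s : Set ι} (hS : DependsOn (· ∈ S) s) (hf : DependsOn f s) : DependsOn (S.indicator f) s := by
  intro x y hxy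
  have hmem : (x ∈ S) = (y ∈ S) := hS hxy
  by_cases hx : x ∈ S
  · rw [Set.indicator_of_mem hx, Set.indicator_of_mem (hmem ▸ hx), hf hxy]
  · rw [Set.indicator_of_notMem hx, Set.indicator_of_notMem (hmem ▸ hx)]

theorem lintegral_eq_sum_walk {Q : Measure (ℕ → ℤ)} {j : ℤ} (hQ : IsSRWFrom Q j) {n : ℕ}
    {F : (ℕ → ℤ) → ℝ≥0∞} (hF : DependsOn F (Set.Iic n)) :
    ∫⁻ x, F x ∂Q = ∑ s : Fin n → Bool, 2⁻¹ ^ n * F (walk j s) := by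
  have := hQ.1
  set C : (Fin n → Bool) → Set (ℕ → ℤ) := fun s => {x | ∀ k ≤ n, x k = walk j s k}
  have hC_meas : ∀ s, MeasurableSet (C s) := fun s =>
    measurableSet_of_dependsOn (n := n) fun x y hxy =>
      propext (forall₂_congr fun k hk => by rw [hxy k hk])
  have hC_prob : ∀ s, Q (C s) = 2⁻¹ ^ n := fun s => by
    rw [hQ.2 n (walk j s), if_pos ⟨walk_zero j s,
      fun k hk => walk_succ_sub_eq_one_or_eq_neg_one j s hk⟩, one_div]
  have hC_disj : Pairwise (Function.onFun Disjoint C) := fun s t hst =>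
    Set.disjoint_left.2 fun x hs ht =>
      hst (walk_injective j s fun k hk => (hs k hk).symm.trans (ht k hk))
  have hC_ae : ∀ᵐ x ∂Q, x ∈ ⋃ s, C s := by
    refine mem_ae_iff.2 ((prob_compl_eq_zero_iff (MeasurableSet.iUnion hC_meas)).2 ?_)
    rw [measure_iUnion hC_disj hC_meas, tsum_fintype]
    simp only [hC_prob, sum_const, card_univ, Fintype.card_fun, Fintype.card_bool,
      Fintype.card_fin, nsmul_eq_mul]
    push_cast
    rw [← mul_pow, ENNReal.mul_inv_cancel two_ne_zero ENNReal.ofNat_ne_top, one_pow]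
  calc ∫⁻ x, F x ∂Q = ∫⁻ x in ⋃ s, C s, F x ∂Q := by
        rw [Measure.restrict_eq_self_of_ae_mem hC_ae]
    _ = ∑ s, ∫⁻ x in C s, F x ∂Q := by rw [lintegral_iUnion hC_meas hC_disj, tsum_fintype]
    _ = ∑ s, 2⁻¹ ^ n * F (walk j s) := sum_congr rfl fun s _ => by
        rw [setLIntegral_congr_fun (hC_meas s) (fun x hx => hF fun k hk => hx k hk),
          setLIntegral_const, hC_prob, mul_comm]

section hitTime

variable {a : ℤ} {x : ℕ → ℤ} {n : ℕ}

lemma le_hitTime_iff : (n : ℕ∞) ≤ hitTime a x ↔ ∀ k < n, x k ≠ a := by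
  simp only [hitTime, le_sInf_iff, Set.forall_mem_image, Set.mem_ofPred_eq, Nat.cast_le]
  exact ⟨fun H k hk hxk => absurd (H hxk) (not_le.2 hk),
    fun H k hxk => not_lt.1 fun hk => H k hk hxk⟩

lemma lt_hitTime_iff : (n : ℕ∞) < hitTime a x ↔ ∀ k ≤ n, x k ≠ a := by
  rw [← ENat.add_one_le_iff (ENat.natCast_ne_top n), ← Nat.cast_succ, le_hitTime_iff]
  simp only [Nat.lt_succ_iff]

lemma hitTime_eq_iff : hitTime a x = n ↔ x n = a ∧ ∀ k < n, x k ≠ a := by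
  refine ⟨fun H => ⟨?_, le_hitTime_iff.1 H.ge⟩, fun H => ?_⟩
  · by_contra hne
    refine (lt_hitTime_iff.2 fun k hk => ?_).ne' H
    rcases hk.lt_or_eq with hk | rfl
    exacts [le_hitTime_iff.1 H.ge k hk, hne]
  · exact le_antisymm (sInf_le ⟨n, H.1, rfl⟩) (le_hitTime_iff.2 H.2)

end hitTime

section events

variable {h n : ℕ} {x : ℕ → ℤ}

lemma hitTime_of_mem_firstExitTop (hx : x ∈ firstExitTop h n) : hitTime h x = n :=
  hitTime_eq_iff.2 ⟨hx.1, fun k hk => (hx.2 k hk).2⟩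

lemma setOf_hitTime_lt_eq_iUnion (hh : h ≠ 0) :
    {x : ℕ → ℤ | hitTime h x < hitTime 0 x} = ⋃ n, firstExitTop h n := by
  have hh' : (h : ℤ) ≠ 0 := by exact_mod_cast hh
  ext x
  simp only [Set.mem_ofPred_eq, Set.mem_iUnion]
  constructor
  · intro hx
    obtain ⟨n, hn⟩ := ENat.ne_top_iff_exists.1 (hx.trans_le le_top).ne
    obtain ⟨hxn, hbefore⟩ := hitTime_eq_iff.1 hn.symm
    have h0 := lt_hitTime_iff.1 (hn ▸ hx)
    exact ⟨n, hxn, fun k hk => ⟨h0 k hk.le, hbefore k hk⟩⟩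
  · rintro ⟨n, hx⟩
    rw [hitTime_of_mem_firstExitTop hx, lt_hitTime_iff]
    intro k hk
    rcases hk.lt_or_eq with hk | rfl
    exacts [(hx.2 k hk).1, hx.1 ▸ hh']

lemma pairwise_disjoint_firstExitTop : Pairwise (Function.onFun Disjoint (firstExitTop h)) :=
  fun n m hnm => Set.disjoint_left.2 fun x hn hm => hnm <| by
    have := (hitTime_of_mem_firstExitTop hn).symm.trans (hitTime_of_mem_firstExitTop hm)
    exact_mod_cast this

lemma dependsOn_mem_firstExitTop : DependsOn (· ∈ firstExitTop h n) (Set.Iic n) := by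
  intro x y hxy
  simp only [firstExitTop, Set.mem_ofPred_eq]
  rw [hxy n (Set.mem_Iic.2 le_rfl)]
  exact propext (and_congr_right' (forall₂_congr fun k hk => by
    rw [hxy k (Set.mem_Iic.2 hk.le)]))

lemma measurableSet_firstExitTop : MeasurableSet (firstExitTop h n) :=
  measurableSet_of_dependsOn dependsOn_mem_firstExitTop

lemma dependsOn_edgeVisitsUpTo (W : Set (ℤ × ℤ)) : DependsOn (edgeVisitsUpTo W n) (Set.Iic n) :=
  fun x y hxy => sum_congr rfl fun k hk => by
    rw [mem_range] at hk
    rw [hxy k (Set.mem_Iic.2 hk.le), hxy (k + 1) (Set.mem_Iic.2 hk)]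

end events

noncomputable def edgeVisits (W : Set (ℤ × ℤ)) (a : ℤ) (x : ℕ → ℤ) : ℝ≥0∞ :=
  ∑' k : ℕ, if (k : ℕ∞) < hitTime a x then W.indicator 1 (x k, x (k + 1)) else 0

lemma edgeVisits_of_hitTime_eq {W : Set (ℤ × ℤ)} {a : ℤ} {x : ℕ → ℤ} {n : ℕ}
    (hx : hitTime a x = n) : edgeVisits W a x = edgeVisitsUpTo W n x := by
  rw [edgeVisits, hx, tsum_eq_sum (s := range n) fun k hk => by simp_all]
  exact sum_congr rfl fun k hk => if_pos (by simpa using hk)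

section leg

variable {Q : Measure (ℕ → ℤ)} {j : ℤ} {h : ℕ}

theorem measure_hitTime_lt (hQ : IsSRWFrom Q j) (hh : h ≠ 0) :
    Q {x | hitTime h x < hitTime 0 x} = probExitTop h j := by
  rw [setOf_hitTime_lt_eq_iUnion hh, measure_iUnion pairwise_disjoint_firstExitTop
    fun n => measurableSet_firstExitTop]
  refine tsum_congr fun n => ?_
  rw [← lintegral_indicator_one measurableSet_firstExitTop]
  exact lintegral_eq_sum_walk hQ (dependsOn_indicator dependsOn_mem_firstExitTop fun _ _ _ => rfl)

theorem setLIntegral_edgeVisits (W : Set (ℤ × ℤ)) (hQ : IsSRWFrom Q j) (hh : h ≠ 0) :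
    ∫⁻ x in {x | hitTime h x < hitTime 0 x}, edgeVisits W h x ∂Q = visitsExitTop W h j := by
  rw [setOf_hitTime_lt_eq_iUnion hh, lintegral_iUnion (fun n => measurableSet_firstExitTop)
    pairwise_disjoint_firstExitTop]
  refine tsum_congr fun n => ?_
  rw [← lintegral_indicator measurableSet_firstExitTop,
    Set.indicator_congr fun x hx => edgeVisits_of_hitTime_eq (hitTime_of_mem_firstExitTop hx)]
  exact lintegral_eq_sum_walk hQ
    (dependsOn_indicator dependsOn_mem_firstExitTop (dependsOn_edgeVisitsUpTo W))

theorem setLIntegral_edgeVisits_div (W : Set (ℤ × ℤ)) (hQ : IsSRWFrom Q 1) (hh : h ≠ 0) :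
    (∫⁻ x in {x | hitTime h x < hitTime 0 x}, edgeVisits W h x ∂Q)
      / Q {x | hitTime h x < hitTime 0 x} = ENNReal.ofReal (edgeMean W h) := by
  have hh₁ : (1 : ℤ) ≤ h := by omega
  have hh' : (h : ℝ) ≠ 0 := by exact_mod_cast hh
  have hV : visitsExitTop W h 1 = ENNReal.ofReal (edgeMean W h / h) := by
    rw [← visitsExitTop_one_toReal hh,
      ENNReal.ofReal_toReal (visitsExitTop_ne_top zero_le_one hh₁)]
  have hP : probExitTop h 1 = ENNReal.ofReal (1 / h) := by
    rw [← ENNReal.ofReal_toReal (probExitTop_ne_top zero_le_one hh₁)]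
    simpa using congrArg ENNReal.ofReal (probExitTop_toReal hh (m := 1) (by omega))
  rw [setLIntegral_edgeVisits W hQ hh, measure_hitTime_lt hQ hh, hV, hP,
    ← ENNReal.ofReal_div_of_pos (by positivity)]
  field_simp

end leg

def reflection (c : ℤ) : (ℕ → ℤ) ≃ᵐ (ℕ → ℤ) where
  toFun x k := c - x k
  invFun x k := c - x k
  left_inv x := by simp
  right_inv x := by simp
  measurable_toFun := measurable_pi_lambda _ fun k => measurable_const.sub (measurable_pi_apply k)
  measurable_invFun := measurable_pi_lambda _ fun k => measurable_const.sub (measurable_pi_apply k)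

section reflection

variable (c : ℤ)

@[simp] lemma reflection_apply (x : ℕ → ℤ) (k : ℕ) : reflection c x k = c - x k := rfl

lemma isSRWFrom_map_reflection {Q : Measure (ℕ → ℤ)} {j : ℤ} (hQ : IsSRWFrom Q j) :
    IsSRWFrom (Q.map (reflection c)) (c - j) := by
  have := hQ.1
  refine ⟨Measure.isProbabilityMeasure_map (reflection c).measurable.aemeasurable, fun n f => ?_⟩
  have hpre : reflection c ⁻¹' {x | ∀ k ≤ n, x k = f k} = {x | ∀ k ≤ n, x k = c - f k} := by
    ext x
    simp only [Set.mem_preimage, Set.mem_ofPred_eq, reflection_apply]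
    exact forall₂_congr fun k _ => by omega
  rw [MeasurableEquiv.map_apply, hpre, hQ.2 n]
  refine if_congr ⟨fun ⟨h₀, hstep⟩ => ⟨by omega, fun k hk => ?_⟩,
    fun ⟨h₀, hstep⟩ => ⟨by omega, fun k hk => ?_⟩⟩ rfl rfl
  · have := hstep k hk; omega
  · have := hstep k hk; omega

lemma hitTime_reflection (a : ℤ) (x : ℕ → ℤ) :
    hitTime a (reflection c x) = hitTime (c - a) x := by
  simp only [hitTime, reflection_apply]
  congr 2
  ext k
  simp only [Set.mem_ofPred_eq]
  omega

lemma edgeVisits_reflection (W : Set (ℤ × ℤ)) (a : ℤ) (x : ℕ → ℤ) :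
    edgeVisits (Prod.map (c - ·) (c - ·) ⁻¹' W) (c - a) (reflection c x) = edgeVisits W a x := by
  simp [edgeVisits, hitTime_reflection, Set.indicator_apply, Prod.map]

theorem setLIntegral_edgeVisits_div_map_reflection (Q : Measure (ℕ → ℤ)) (W : Set (ℤ × ℤ))
    (a b : ℤ) :
    (∫⁻ y in {y | hitTime (c - a) y < hitTime (c - b) y},
          edgeVisits (Prod.map (c - ·) (c - ·) ⁻¹' W) (c - a) y ∂(Q.map (reflection c)))
        / Q.map (reflection c) {y | hitTime (c - a) y < hitTime (c - b) y}
      = (∫⁻ x in {x | hitTime a x < hitTime b x}, edgeVisits W a x ∂Q)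
        / Q {x | hitTime a x < hitTime b x} := by
  have hpre : reflection c ⁻¹' {y | hitTime (c - a) y < hitTime (c - b) y}
      = {x | hitTime a x < hitTime b x} := by
    ext x
    simp [hitTime_reflection]
  simp only [MeasurableEquiv.map_apply, MeasurableEquiv.restrict_map, lintegral_map_equiv, hpre,
    edgeVisits_reflection]

end reflection

theorem setLIntegral_edgeVisits_hitTime_zero_div {Q : Measure (ℕ → ℤ)} {h : ℕ} (W : Set (ℤ × ℤ))
    (hQ : IsSRWFrom Q h) :
    (∫⁻ x in {x | hitTime 0 x < hitTime ((h : ℤ) + 1) x}, edgeVisits W 0 x ∂Q)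
        / Q {x | hitTime 0 x < hitTime ((h : ℤ) + 1) x}
      = ENNReal.ofReal (edgeMean (Prod.map ((h + 1 : ℤ) - ·) ((h + 1 : ℤ) - ·) ⁻¹' W) (h + 1)) := by
  have hQ' : IsSRWFrom (Q.map (reflection (h + 1))) 1 := by
    simpa using isSRWFrom_map_reflection (h + 1) hQ
  rw [← setLIntegral_edgeVisits_div_map_reflection (h + 1)]
  simpa using setLIntegral_edgeVisits_div (h := h + 1) _ hQ' (by omega)

def crossEdges (i : ℤ) : Set (ℤ × ℤ) := {(i, i + 1), (i + 1, i)}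

lemma visitCount_eq_edgeVisits {i a : ℤ} (hia : i ≠ a) :
    visitCount i a = edgeVisits {e | e.1 = i} a := by
  funext x
  refine tsum_congr fun k => ?_
  by_cases hk : (k : ℕ∞) < hitTime a x
  · simp [hk.le, hk, Set.indicator_apply]
  · have : ¬ ((k : ℕ∞) ≤ hitTime a x ∧ x k = i) := fun ⟨hle, hxk⟩ =>
      hk (lt_hitTime_iff.2 fun m hm => by
        rcases hm.lt_or_eq with hm | rfl
        exacts [le_hitTime_iff.1 hle m hm, hxk ▸ hia])
    simp [hk, this]

lemma crossCount_eq_edgeVisits (i a : ℤ) : crossCount i a = edgeVisits (crossEdges i) a := by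
  funext x
  refine tsum_congr fun k => ?_
  by_cases hk : (k : ℕ∞) < hitTime a x
  · simp [hk, Set.indicator_apply, crossEdges, Prod.ext_iff]
  · simp [hk]

lemma preimage_reflect_setOf_fst (c i : ℤ) :
    Prod.map (c - ·) (c - ·) ⁻¹' {e : ℤ × ℤ | e.1 = i} = {e | e.1 = c - i} := by
  ext e
  simp only [Set.mem_preimage, Set.mem_ofPred_eq, Prod.map_fst]
  omega

lemma preimage_reflect_crossEdges (c i : ℤ) :
    Prod.map (c - ·) (c - ·) ⁻¹' crossEdges i = crossEdges (c - i - 1) := by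
  ext e
  simp only [crossEdges, Set.mem_preimage, Set.mem_insert_iff, Set.mem_singleton_iff,
    Prod.ext_iff, Prod.map_fst, Prod.map_snd]
  omega

lemma ofReal_edgeMean_visits {h i : ℕ} (hi : 1 ≤ i) (hih : i < h) :
    ENNReal.ofReal (edgeMean {e | e.1 = i} h) = ((2 * i * (h - i) : ℕ) : ℝ≥0∞) / h := by
  rw [edgeMean, sum_eq_single_of_mem i (mem_Icc.2 ⟨hi, hih.le⟩) fun t _ hti => by simp [hti],
    ENNReal.ofReal_div_of_pos (by exact_mod_cast (by omega : 0 < h)), ← ENNReal.ofReal_natCast,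
    ← ENNReal.ofReal_natCast h]
  congr 2
  push_cast [hih.le]
  simp only [Set.indicator_apply, Set.mem_ofPred_eq, if_true, Pi.one_apply]
  ring

lemma edgeMean_crossEdges {h i : ℕ} (hi : 1 ≤ i) (hih : i < h) :
    edgeMean (crossEdges i) h = 2 * (h - i) * (i + 1) / h - 1 := by
  have hup : ∀ t : ℕ, ((t : ℤ), (t : ℤ) + 1) ∈ crossEdges i ↔ t = i := by
    intro t
    simp only [crossEdges, Set.mem_insert_iff, Set.mem_singleton_iff, Prod.ext_iff]
    omega
  have hdown : ∀ t : ℕ, ((t : ℤ), (t : ℤ) - 1) ∈ crossEdges i ↔ t = i + 1 := by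
    intro t
    simp only [crossEdges, Set.mem_insert_iff, Set.mem_singleton_iff, Prod.ext_iff]
    omega
  simp only [edgeMean, Set.indicator_apply, hup, hdown, Pi.one_apply, ite_mul, one_mul, zero_mul,
    mul_add, mul_ite, mul_zero, sum_add_distrib, sum_ite_eq', mem_Icc]
  simp only [hi, hih.le, show 1 ≤ i + 1 by omega, show i + 1 ≤ h by omega, and_self, if_true]
  have hh : (h : ℝ) ≠ 0 := by exact_mod_cast (by omega : h ≠ 0)
  field_simp
  push_cast
  ring

end SimpleRandomWalk

open SimpleRandomWalk in
theorem statement_13_general (P : ℤ → Measure (ℕ → ℤ)) (hP : ∀ j : ℤ, IsSRWFrom (P j) j)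
    (h i : ℕ) (hi : 1 ≤ i) (hih : i ≤ h - 1) :
    ((∫⁻ x in {x | hitTime (h : ℤ) x < hitTime 0 x},
          visitCount (i : ℤ) (h : ℤ) x ∂(P 1)) /
        P 1 {x | hitTime (h : ℤ) x < hitTime 0 x} =
      ((2 * i * (h - i) : ℕ) : ℝ≥0∞) / (h : ℝ≥0∞)) ∧
    ((∫⁻ x in {x | hitTime 0 x < hitTime ((h : ℤ) + 1) x},
          visitCount (i : ℤ) 0 x ∂(P (h : ℤ))) /
        P (h : ℤ) {x | hitTime 0 x < hitTime ((h : ℤ) + 1) x} =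
      ((2 * i * (h + 1 - i) : ℕ) : ℝ≥0∞) / ((h : ℝ≥0∞) + 1)) ∧
    ((∫⁻ x in {x | hitTime (h : ℤ) x < hitTime 0 x},
          crossCount (i : ℤ) (h : ℤ) x ∂(P 1)) /
        P 1 {x | hitTime (h : ℤ) x < hitTime 0 x} =
      ENNReal.ofReal (2 * ((h : ℝ) - i) * ((i : ℝ) + 1) / h - 1)) ∧
    ((∫⁻ x in {x | hitTime 0 x < hitTime ((h : ℤ) + 1) x},
          crossCount (i : ℤ) 0 x ∂(P (h : ℤ))) /
        P (h : ℤ) {x | hitTime 0 x < hitTime ((h : ℤ) + 1) x} =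
      ENNReal.ofReal (2 * ((h : ℝ) + 1 - i) * ((i : ℝ) + 1) / ((h : ℝ) + 1) - 1)) := by
  have hih' : i < h := by omega
  refine ⟨?_, ?_, ?_, ?_⟩
  · rw [visitCount_eq_edgeVisits (by omega), setLIntegral_edgeVisits_div _ (hP 1) (by omega),
      ofReal_edgeMean_visits hi hih']
  · rw [visitCount_eq_edgeVisits (by omega), setLIntegral_edgeVisits_hitTime_zero_div _ (hP h),
      preimage_reflect_setOf_fst, show (h + 1 : ℤ) - i = ((h + 1 - i : ℕ) : ℤ) by omega,
      ofReal_edgeMean_visits (by omega) (by omega), show h + 1 - (h + 1 - i) = i by omega,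
      mul_right_comm 2, Nat.cast_succ]
  · rw [crossCount_eq_edgeVisits, setLIntegral_edgeVisits_div _ (hP 1) (by omega),
      edgeMean_crossEdges hi hih']
  · rw [crossCount_eq_edgeVisits, setLIntegral_edgeVisits_hitTime_zero_div _ (hP h),
      preimage_reflect_crossEdges, show (h + 1 : ℤ) - i - 1 = ((h - i : ℕ) : ℤ) by omega,
      edgeMean_crossEdges (by omega) (by omega)]
    push_cast [hih'.le]
    ring_nf

/-- Expected number of visits to `i` and of `{i,i+1}`-crossings for the two
conditioned legs of the excursion conditioned to have height `h`. -/
theorem statement_13 (P : ℤ → Measure (ℕ → ℤ)) (hP : ∀ j : ℤ, IsSRWFrom (P j) j)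
    (h i : ℕ) (hh : 2 ≤ h) (hi : 1 ≤ i) (hih : i ≤ h - 1) :
    ((∫⁻ x in {x | hitTime (h : ℤ) x < hitTime 0 x},
          visitCount (i : ℤ) (h : ℤ) x ∂(P 1)) /
        P 1 {x | hitTime (h : ℤ) x < hitTime 0 x} =
      ((2 * i * (h - i) : ℕ) : ℝ≥0∞) / (h : ℝ≥0∞)) ∧
    ((∫⁻ x in {x | hitTime 0 x < hitTime ((h : ℤ) + 1) x},
          visitCount (i : ℤ) 0 x ∂(P (h : ℤ))) /
        P (h : ℤ) {x | hitTime 0 x < hitTime ((h : ℤ) + 1) x} =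
      ((2 * i * (h + 1 - i) : ℕ) : ℝ≥0∞) / ((h : ℝ≥0∞) + 1)) ∧
    ((∫⁻ x in {x | hitTime (h : ℤ) x < hitTime 0 x},
          crossCount (i : ℤ) (h : ℤ) x ∂(P 1)) /
        P 1 {x | hitTime (h : ℤ) x < hitTime 0 x} =
      ENNReal.ofReal (2 * ((h : ℝ) - i) * ((i : ℝ) + 1) / h - 1)) ∧
    ((∫⁻ x in {x | hitTime 0 x < hitTime ((h : ℤ) + 1) x},
          crossCount (i : ℤ) 0 x ∂(P (h : ℤ))) /
        P (h : ℤ) {x | hitTime 0 x < hitTime ((h : ℤ) + 1) x} =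
      ENNReal.ofReal (2 * ((h : ℝ) + 1 - i) * ((i : ℝ) + 1) / ((h : ℝ) + 1) - 1)) :=
  statement_13_general P hP h i hi hih
end
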